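/- arXiv:0911.1773 — 4 statements merged into one kernel-verified Lean document; each statement's English description precedes it below -/
import Mathlib

section
/- Let X = (B_1, B_2, d, i, j) be an ADHM datum on (V_0, V_1, W) satisfying the ADHM relation, and assume X is (m,m+1)-semistable. Then the linear map τ : Hom(ℂ^m, V_1) ⊕ Hom(ℂ^{m+1}, V_0) ⊕ Hom(ℂ^{m+1}, V_0) ⊕ Hom(ℂ^{m+1}, W) → Hom(ℂ^{m+1}, V_0) defined by τ(d̃, B̃_1, B̃_2, j̃) = B_1∘d̃∘P_1 − B_2∘d̃∘P_2 + i∘j̃ + B_1∘d∘B̃_2 − B_2∘d∘B̃_1 is surjective. -/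
open Module Polynomial
set_option linter.unusedSectionVars false
set_option maxHeartbeats 1000000

section helpers
variable {ι ι' : Type*} [Fintype ι] [Fintype ι'] {N N' : Type*}
  [AddCommGroup N] [Module ℂ N] [AddCommGroup N'] [Module ℂ N']

/-- rank-one insertion `v ↦ (x ↦ x k • v)`. -/
noncomputable def insMap (k : ι) : N →ₗ[ℂ] ((ι → ℂ) →ₗ[ℂ] N) where
  toFun v := (LinearMap.proj k).smulRight v
  map_add' u v := by ext x; simp
  map_smul' c v := by
    ext x
    simp only [LinearMap.smulRight_apply, LinearMap.proj_apply, RingHom.id_apply,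
      LinearMap.smul_apply]
    rw [smul_comm]

@[simp] lemma insMap_apply (k : ι) (v : N) (x : ι → ℂ) : insMap k v x = x k • v := rfl

lemma comp_insMap (f : N →ₗ[ℂ] N') (k : ι) (v : N) :
    f ∘ₗ insMap k v = insMap k (f v) := by
  ext x; simp

lemma insMap_comp_funLeft (g : ι' → ι) (k : ι') (v : N) :
    (insMap k v) ∘ₗ LinearMap.funLeft ℂ ℂ g = insMap (g k) v := by
  ext x; simp [LinearMap.funLeft_apply]

end helpers

section poly

noncomputable def toPoly {n : ℕ} : (Fin n → ℂ) →ₗ[ℂ] Polynomial ℂ :=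
  ∑ k : Fin n, (LinearMap.proj k).smulRight (Polynomial.X ^ (k : ℕ))

lemma toPoly_apply {n : ℕ} (c : Fin n → ℂ) :
    toPoly c = ∑ k : Fin n, c k • Polynomial.X ^ (k : ℕ) := by
  simp [toPoly]

lemma toPoly_mem_degreeLT {n : ℕ} (c : Fin n → ℂ) : toPoly c ∈ degreeLT ℂ n := by
  rw [toPoly_apply]
  refine Submodule.sum_mem _ fun k _ => Submodule.smul_mem _ _ ?_
  rw [Polynomial.mem_degreeLT, Polynomial.degree_X_pow]
  exact_mod_cast k.isLt

lemma toPoly_coeff {n : ℕ} (c : Fin n → ℂ) (k : Fin n) :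
    (toPoly c).coeff (k : ℕ) = c k := by
  rw [toPoly_apply, Polynomial.finset_sum_coeff]
  simp only [Polynomial.coeff_smul, Polynomial.coeff_X_pow, smul_eq_mul, mul_ite, mul_one,
    mul_zero]
  rw [Finset.sum_eq_single k] <;> simp +contextual [Fin.val_inj, eq_comm]

lemma toPoly_ne_zero {n : ℕ} {c : Fin n → ℂ} (hc : c ≠ 0) : toPoly c ≠ 0 := by
  intro h
  apply hc
  funext k
  have := toPoly_coeff c k
  rw [h] at this
  simpa using this.symm

def S1map (n : ℕ) : (Fin n → ℂ) →ₗ[ℂ] (Fin (n + 1) → ℂ) where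
  toFun c := Fin.snoc c 0
  map_add' a b := by
    ext t
    refine Fin.lastCases ?_ (fun k => ?_) t <;> simp
  map_smul' r a := by
    ext t
    refine Fin.lastCases ?_ (fun k => ?_) t <;> simp

def S2map (n : ℕ) : (Fin n → ℂ) →ₗ[ℂ] (Fin (n + 1) → ℂ) where
  toFun c := Fin.cons 0 c
  map_add' a b := by
    ext t
    refine Fin.cases ?_ (fun k => ?_) t <;> simp
  map_smul' r a := by
    ext t
    refine Fin.cases ?_ (fun k => ?_) t <;> simp

@[simp] lemma S1map_apply {n : ℕ} (c : Fin n → ℂ) : S1map n c = Fin.snoc c 0 := rfl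
@[simp] lemma S2map_apply {n : ℕ} (c : Fin n → ℂ) : S2map n c = Fin.cons 0 c := rfl

lemma S1map_injective (n : ℕ) : Function.Injective (S1map n) := by
  intro a b h
  funext k
  have := congrFun h (Fin.castSucc k)
  simpa using this

lemma toPoly_S1 {n : ℕ} (c : Fin n → ℂ) : toPoly (S1map n c) = toPoly c := by
  rw [toPoly_apply, toPoly_apply, Fin.sum_univ_castSucc]
  simp

lemma toPoly_S2 {n : ℕ} (c : Fin n → ℂ) : toPoly (S2map n c) = Polynomial.X * toPoly c := by
  rw [toPoly_apply, toPoly_apply, Fin.sum_univ_succ, Finset.mul_sum]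
  simp only [S2map_apply, Fin.cons_zero, Fin.cons_succ, zero_smul, zero_add, Fin.val_succ]
  refine Finset.sum_congr rfl fun k _ => ?_
  rw [mul_smul_comm, ← pow_succ']

/-- The key combinatorial lemma. -/
lemma core_lemma {n : ℕ} (R : Submodule ℂ (Fin n → ℂ)) (hR : R ≠ ⊥) :
    finrank ℂ R + 1 ≤ finrank ℂ ↥(R.map (S1map n) ⊔ R.map (S2map n)) := by
  by_contra hcon
  push_neg at hcon
  have h1 : finrank ℂ ↥(R.map (S1map n)) = finrank ℂ R :=
    ((Submodule.equivMapOfInjective _ (S1map_injective n) R).finrank_eq).symm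
  have hle : R.map (S1map n) ≤ R.map (S1map n) ⊔ R.map (S2map n) := le_sup_left
  have heq : R.map (S1map n) = R.map (S1map n) ⊔ R.map (S2map n) :=
    Submodule.eq_of_le_of_finrank_le hle (by omega)
  have h2 : R.map (S2map n) ≤ R.map (S1map n) := heq ▸ le_sup_right
  have key : ∀ c ∈ R, ∃ c' ∈ R, Polynomial.X * toPoly c = toPoly c' := by
    intro c hc
    have : S2map n c ∈ R.map (S1map n) := h2 ⟨c, hc, rfl⟩
    obtain ⟨c', hc', hcc⟩ := this
    exact ⟨c', hc', by rw [← toPoly_S2, ← hcc, toPoly_S1]⟩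
  have keypow : ∀ (j : ℕ), ∀ c ∈ R, ∃ c' ∈ R, Polynomial.X ^ j * toPoly c = toPoly c' := by
    intro j
    induction j with
    | zero => exact fun c hc => ⟨c, hc, by simp⟩
    | succ j ih =>
      intro c hc
      obtain ⟨c', hc', hcc⟩ := ih c hc
      obtain ⟨c'', hc'', hcc'⟩ := key c' hc'
      refine ⟨c'', hc'', ?_⟩
      rw [← hcc', ← hcc, pow_succ']
      ring
  obtain ⟨c0, hc0R, hc0⟩ := Submodule.exists_mem_ne_zero_of_ne_bot hR
  obtain ⟨c', hc', hcc⟩ := keypow n c0 hc0R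
  have hp0 : toPoly c0 ≠ 0 := toPoly_ne_zero hc0
  have hq0 : toPoly c' ≠ 0 := by
    rw [← hcc]
    exact mul_ne_zero (pow_ne_zero _ Polynomial.X_ne_zero) hp0
  have hdeg : (toPoly c').natDegree < n :=
    (Polynomial.natDegree_lt_iff_degree_lt hq0).mpr
      (Polynomial.mem_degreeLT.mp (toPoly_mem_degreeLT c'))
  have : (toPoly c').natDegree = n + (toPoly c0).natDegree := by
    rw [← hcc, Polynomial.natDegree_mul (pow_ne_zero _ Polynomial.X_ne_zero) hp0,
      Polynomial.natDegree_X_pow]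
  omega

end poly

/-- An ADHM datum on `(V0, V1, W)`: maps `B1 B2 : V1 → V0`, `d : V0 → V1`, `i : W → V0`,
`j : V1 → W` satisfying the ADHM relation `B1∘d∘B2 − B2∘d∘B1 + i∘j = 0`. -/
structure ADHMW (V0 V1 W : Type*)
    [AddCommGroup V0] [Module ℂ V0] [AddCommGroup V1] [Module ℂ V1]
    [AddCommGroup W] [Module ℂ W] where
  B1 : V1 →ₗ[ℂ] V0
  B2 : V1 →ₗ[ℂ] V0
  d : V0 →ₗ[ℂ] V1
  i : W →ₗ[ℂ] V0
  j : V1 →ₗ[ℂ] W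
  rel : B1 ∘ₗ d ∘ₗ B2 - B2 ∘ₗ d ∘ₗ B1 + i ∘ₗ j = 0

/-- `(m, m+1)`-semistability of an ADHM datum. -/
def MMSemistable (m : ℕ) {V0 V1 W : Type*}
    [AddCommGroup V0] [Module ℂ V0] [AddCommGroup V1] [Module ℂ V1]
    [AddCommGroup W] [Module ℂ W] (X : ADHMW V0 V1 W) : Prop :=
  (∀ (S0 : Submodule ℂ V0) (S1 : Submodule ℂ V1),
      (∀ x ∈ S1, X.B1 x ∈ S0) → (∀ x ∈ S1, X.B2 x ∈ S0) →
      (∀ x ∈ S0, X.d x ∈ S1) → (∀ x ∈ S1, X.j x = 0) →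
      (m : ℤ) * (finrank ℂ S1 : ℤ) ≤ ((m : ℤ) + 1) * (finrank ℂ S0 : ℤ)) ∧
  (∀ (T0 : Submodule ℂ V0) (T1 : Submodule ℂ V1),
      (∀ x ∈ T1, X.B1 x ∈ T0) → (∀ x ∈ T1, X.B2 x ∈ T0) →
      (∀ x ∈ T0, X.d x ∈ T1) → (∀ w, X.i w ∈ T0) →
      ((m : ℤ) + 1) * ((finrank ℂ V0 : ℤ) - (finrank ℂ T0 : ℤ)) ≤
        (m : ℤ) * ((finrank ℂ V1 : ℤ) - (finrank ℂ T1 : ℤ)))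

/-- `P1 : ℂ^{m+1} → ℂ^m`, `(x₁, …, x_{m+1}) ↦ (x₁, …, x_m)`. -/
def P1 (m : ℕ) : (Fin (m + 1) → ℂ) →ₗ[ℂ] (Fin m → ℂ) :=
  LinearMap.funLeft ℂ ℂ Fin.castSucc

/-- `P2 : ℂ^{m+1} → ℂ^m`, `(x₁, …, x_{m+1}) ↦ (x₂, …, x_{m+1})`. -/
def P2 (m : ℕ) : (Fin (m + 1) → ℂ) →ₗ[ℂ] (Fin m → ℂ) :=
  LinearMap.funLeft ℂ ℂ Fin.succ


/-- Key vanishing lemma: a family of functionals satisfying the transposed equations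
must vanish, by `(m,m+1)`-semistability. -/
lemma key_vanish (m : ℕ) {V0 V1 W : Type*}
    [AddCommGroup V0] [Module ℂ V0] [FiniteDimensional ℂ V0]
    [AddCommGroup V1] [Module ℂ V1] [FiniteDimensional ℂ V1]
    [AddCommGroup W] [Module ℂ W] [FiniteDimensional ℂ W]
    (X : ADHMW V0 V1 W) (hX : MMSemistable m X)
    (Φ : Fin (m + 1) → Module.Dual ℂ V0)
    (ha : ∀ (l : Fin m) (u : V1), Φ (Fin.castSucc l) (X.B1 u) = Φ (Fin.succ l) (X.B2 u))
    (hb : ∀ (k : Fin (m + 1)) (w : W), Φ k (X.i w) = 0)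
    (hc : ∀ (k : Fin (m + 1)) (v : V0), Φ k (X.B1 (X.d v)) = 0)
    (hd : ∀ (k : Fin (m + 1)) (v : V0), Φ k (X.B2 (X.d v)) = 0) :
    ∀ (k : Fin (m + 1)) (v : V0), Φ k v = 0 := by
  set Φ0 : V0 →ₗ[ℂ] (Fin (m + 1) → ℂ) := LinearMap.pi Φ with hΦ0def
  set H : Fin (m + 1 + 1) → Module.Dual ℂ V1 :=
    Fin.snoc (fun k => (Φ k) ∘ₗ X.B2) ((Φ (Fin.last m)) ∘ₗ X.B1) with hHdef
  have hHc : ∀ k : Fin (m + 1), H (Fin.castSucc k) = (Φ k) ∘ₗ X.B2 := by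
    intro k; simp [hHdef]
  have hHs : ∀ k : Fin (m + 1), H (Fin.succ k) = (Φ k) ∘ₗ X.B1 := by
    intro k
    refine Fin.lastCases ?_ (fun l => ?_) k
    · rw [Fin.succ_last]
      simp [hHdef]
    · rw [Fin.succ_castSucc, hHc]
      ext u
      exact (ha l u).symm
  set Φ1 : V1 →ₗ[ℂ] (Fin (m + 1 + 1) → ℂ) := LinearMap.pi H with hΦ1def
  have hT0mem : ∀ x : V0, x ∈ LinearMap.ker Φ0 ↔ ∀ k, Φ k x = 0 := by
    intro x
    simp [hΦ0def, LinearMap.mem_ker, funext_iff]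
  have hT1mem : ∀ x : V1, x ∈ LinearMap.ker Φ1 ↔ ∀ t, H t x = 0 := by
    intro x
    simp [hΦ1def, LinearMap.mem_ker, funext_iff]
  -- semistability inequality
  have hineq := hX.2 (LinearMap.ker Φ0) (LinearMap.ker Φ1) ?_ ?_ ?_ ?_
  rotate_left
  · intro x hx
    rw [hT0mem]
    intro k
    have := (hT1mem x).mp hx (Fin.succ k)
    rw [hHs] at this
    exact this
  · intro x hx
    rw [hT0mem]
    intro k
    have := (hT1mem x).mp hx (Fin.castSucc k)
    rw [hHc] at this
    exact this
  · intro x _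
    rw [hT1mem]
    intro t
    refine Fin.lastCases ?_ (fun k => ?_) t
    · have hlast : H (Fin.last (m + 1)) = (Φ (Fin.last m)) ∘ₗ X.B1 := by simp [hHdef]
      rw [hlast]
      exact hc _ x
    · rw [hHc]
      exact hd _ x
  · intro w
    rw [hT0mem]
    intro k
    exact hb k w
  -- the transpose maps
  set eE : (Fin (m + 1) → ℂ) →ₗ[ℂ] Module.Dual ℂ V0 :=
    ∑ k : Fin (m + 1), (LinearMap.proj k).smulRight (Φ k) with heEdef
  set eH : (Fin (m + 1 + 1) → ℂ) →ₗ[ℂ] Module.Dual ℂ V1 :=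
    ∑ t : Fin (m + 1 + 1), (LinearMap.proj t).smulRight (H t) with heHdef
  have heE : ∀ (c : Fin (m + 1) → ℂ) (v : V0), eE c v = ∑ k, c k * Φ k v := by
    intro c v
    simp [heEdef, LinearMap.sum_apply]
  have heH : ∀ (c : Fin (m + 1 + 1) → ℂ) (v : V1), eH c v = ∑ t, c t * H t v := by
    intro c v
    simp [heHdef, LinearMap.sum_apply]
  -- rank identities via dual maps
  have hrange0 : LinearMap.range eE = LinearMap.range Φ0.dualMap := by
    apply le_antisymm
    · rintro _ ⟨c, rfl⟩
      refine ⟨∑ k, c k • LinearMap.proj k, ?_⟩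
      ext v
      rw [LinearMap.dualMap_apply, heE]
      simp [hΦ0def, LinearMap.sum_apply]
    · rintro _ ⟨f, rfl⟩
      refine ⟨fun k => f (fun j => if k = j then 1 else 0), ?_⟩
      ext v
      rw [LinearMap.dualMap_apply, heE, LinearMap.pi_apply_eq_sum_univ f (Φ0 v)]
      refine Finset.sum_congr rfl fun k _ => ?_
      rw [smul_eq_mul, mul_comm]
      rfl
  have hrange1 : LinearMap.range eH = LinearMap.range Φ1.dualMap := by
    apply le_antisymm
    · rintro _ ⟨c, rfl⟩
      refine ⟨∑ t, c t • LinearMap.proj t, ?_⟩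
      ext v
      rw [LinearMap.dualMap_apply, heH]
      simp [hΦ1def, LinearMap.sum_apply]
    · rintro _ ⟨f, rfl⟩
      refine ⟨fun t => f (fun j => if t = j then 1 else 0), ?_⟩
      ext v
      rw [LinearMap.dualMap_apply, heH, LinearMap.pi_apply_eq_sum_univ f (Φ1 v)]
      refine Finset.sum_congr rfl fun t _ => ?_
      rw [smul_eq_mul, mul_comm]
      rfl
  have hr0 : finrank ℂ (LinearMap.range eE) = finrank ℂ (LinearMap.range Φ0) := by
    rw [hrange0, LinearMap.finrank_range_dualMap_eq_finrank_range]
  have hr1 : finrank ℂ (LinearMap.range eH) = finrank ℂ (LinearMap.range Φ1) := by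
    rw [hrange1, LinearMap.finrank_range_dualMap_eq_finrank_range]
  -- kernel of eH contains shifted kernels of eE
  have hS1ker : ∀ c ∈ LinearMap.ker eE, S1map (m + 1) c ∈ LinearMap.ker eH := by
    intro c hc'
    rw [LinearMap.mem_ker] at hc' ⊢
    apply LinearMap.ext
    intro v
    rw [LinearMap.zero_apply, heH, Fin.sum_univ_castSucc]
    have h0 : eE c (X.B2 v) = 0 := by rw [hc']; rfl
    rw [heE] at h0
    simp only [S1map_apply, Fin.snoc_castSucc, Fin.snoc_last, zero_mul, add_zero]
    rw [← h0]
    refine Finset.sum_congr rfl fun k _ => ?_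
    rw [hHc]
    rfl
  have hS2ker : ∀ c ∈ LinearMap.ker eE, S2map (m + 1) c ∈ LinearMap.ker eH := by
    intro c hc'
    rw [LinearMap.mem_ker] at hc' ⊢
    apply LinearMap.ext
    intro v
    rw [LinearMap.zero_apply, heH, Fin.sum_univ_succ]
    have h0 : eE c (X.B1 v) = 0 := by rw [hc']; rfl
    rw [heE] at h0
    simp only [S2map_apply, Fin.cons_zero, Fin.cons_succ, zero_mul, zero_add]
    rw [← h0]
    refine Finset.sum_congr rfl fun k _ => ?_
    rw [hHs]
    rfl
  have hsup : (LinearMap.ker eE).map (S1map (m + 1)) ⊔ (LinearMap.ker eE).map (S2map (m + 1))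
      ≤ LinearMap.ker eH := by
    refine sup_le ?_ ?_
    · rintro x ⟨c, hc', rfl⟩
      exact hS1ker c hc'
    · rintro x ⟨c, hc', rfl⟩
      exact hS2ker c hc'
  -- numerology
  obtain ⟨a0, ha0def⟩ : ∃ n, finrank ℂ (LinearMap.range Φ0) = n := ⟨_, rfl⟩
  obtain ⟨a1, ha1def⟩ : ∃ n, finrank ℂ (LinearMap.range Φ1) = n := ⟨_, rfl⟩
  obtain ⟨r0, hr0def⟩ : ∃ n, finrank ℂ (LinearMap.ker eE) = n := ⟨_, rfl⟩
  obtain ⟨r1, hr1def⟩ : ∃ n, finrank ℂ (LinearMap.ker eH) = n := ⟨_, rfl⟩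
  have hd0 : a0 + r0 = m + 1 := by
    have h := LinearMap.finrank_range_add_finrank_ker eE
    rw [hr0, ha0def, hr0def, Module.finrank_fin_fun] at h
    exact h
  have hd1 : a1 + r1 = m + 2 := by
    have h := LinearMap.finrank_range_add_finrank_ker eH
    rw [hr1, ha1def, hr1def, Module.finrank_fin_fun] at h
    exact h
  have hrn0 : a0 + finrank ℂ (LinearMap.ker Φ0) = finrank ℂ V0 := by
    rw [← ha0def]
    exact LinearMap.finrank_range_add_finrank_ker Φ0
  have hrn1 : a1 + finrank ℂ (LinearMap.ker Φ1) = finrank ℂ V1 := by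
    rw [← ha1def]
    exact LinearMap.finrank_range_add_finrank_ker Φ1
  have hmainN : (m + 1) * a0 ≤ m * a1 := by
    have e0 : (finrank ℂ V0 : ℤ) - (finrank ℂ (LinearMap.ker Φ0) : ℤ) = (a0 : ℤ) := by
      rw [← hrn0]; push_cast; ring
    have e1 : (finrank ℂ V1 : ℤ) - (finrank ℂ (LinearMap.ker Φ1) : ℤ) = (a1 : ℤ) := by
      rw [← hrn1]; push_cast; ring
    rw [e0, e1] at hineq
    exact_mod_cast hineq
  have ha0zero : a0 = 0 := by
    by_contra ha0pos
    rcases eq_or_ne (LinearMap.ker eE) ⊥ with hbot | hbot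
    · have hrr : r0 = 0 := by rw [← hr0def, hbot]; exact finrank_bot ℂ _
      have h1' : a0 = m + 1 := by omega
      have h2' : a1 ≤ m + 2 := by omega
      have hfin : (m + 1) * (m + 1) ≤ m * (m + 2) := by
        calc (m + 1) * (m + 1) = (m + 1) * a0 := by rw [h1']
          _ ≤ m * a1 := hmainN
          _ ≤ m * (m + 2) := Nat.mul_le_mul_left m h2'
      have hexp : (m + 1) * (m + 1) = m * (m + 2) + 1 := by ring
      omega
    · have hcore := core_lemma _ hbot
      have hmono : finrank ℂ ↥((LinearMap.ker eE).map (S1map (m + 1)) ⊔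
          (LinearMap.ker eE).map (S2map (m + 1))) ≤ r1 := by
        rw [← hr1def]
        exact Submodule.finrank_mono hsup
      rw [hr0def] at hcore
      have hstep : r0 + 1 ≤ r1 := le_trans hcore hmono
      have hle : a1 ≤ a0 := by omega
      have hcontr : (m + 1) * a0 ≤ m * a0 := le_trans hmainN (Nat.mul_le_mul_left m hle)
      have hexp : (m + 1) * a0 = m * a0 + a0 := by ring
      omega
  have hΦ0zero : Φ0 = 0 :=
    LinearMap.range_eq_bot.mp (Submodule.finrank_eq_zero.mp (ha0def.trans ha0zero))
  intro k v
  have h := LinearMap.congr_fun hΦ0zero v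
  exact congrFun h k
/-- Surjectivity of the map `τ` computing `Ext²(C_m, E) = 0` for an `(m,m+1)`-semistable
ADHM datum. -/
theorem tau_surjective_Ext_from_Cm (m : ℕ) {V0 V1 W : Type*}
    [AddCommGroup V0] [Module ℂ V0] [FiniteDimensional ℂ V0]
    [AddCommGroup V1] [Module ℂ V1] [FiniteDimensional ℂ V1]
    [AddCommGroup W] [Module ℂ W] [FiniteDimensional ℂ W]
    (X : ADHMW V0 V1 W) (hX : MMSemistable m X) :
    ∀ C : (Fin (m + 1) → ℂ) →ₗ[ℂ] V0,
      ∃ (dt : (Fin m → ℂ) →ₗ[ℂ] V1) (Bt1 Bt2 : (Fin (m + 1) → ℂ) →ₗ[ℂ] V0)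
        (jt : (Fin (m + 1) → ℂ) →ₗ[ℂ] W),
        X.B1 ∘ₗ dt ∘ₗ P1 m - X.B2 ∘ₗ dt ∘ₗ P2 m + X.i ∘ₗ jt
          + X.B1 ∘ₗ X.d ∘ₗ Bt2 - X.B2 ∘ₗ X.d ∘ₗ Bt1 = C := by
  classical
  by_contra hcon
  push_neg at hcon
  obtain ⟨C0, hC0⟩ := hcon
  let U : Submodule ℂ ((Fin (m + 1) → ℂ) →ₗ[ℂ] V0) :=
    { carrier := {C | ∃ dt Bt1 Bt2 jt, X.B1 ∘ₗ dt ∘ₗ P1 m - X.B2 ∘ₗ dt ∘ₗ P2 m + X.i ∘ₗ jt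
          + X.B1 ∘ₗ X.d ∘ₗ Bt2 - X.B2 ∘ₗ X.d ∘ₗ Bt1 = C}
      add_mem' := by
        rintro a b ⟨d1, B11, B21, j1, rfl⟩ ⟨d2, B12, B22, j2, rfl⟩
        refine ⟨d1 + d2, B11 + B12, B21 + B22, j1 + j2, ?_⟩
        simp only [LinearMap.comp_add, LinearMap.add_comp]
        abel
      zero_mem' := ⟨0, 0, 0, 0, by simp⟩
      smul_mem' := by
        rintro c a ⟨d1, B11, B21, j1, rfl⟩
        refine ⟨c • d1, c • B11, c • B21, c • j1, ?_⟩
        simp only [LinearMap.comp_smul, LinearMap.smul_comp, ← smul_add, ← smul_sub] }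
  have hC0U : C0 ∉ U := by
    rintro ⟨dt, b1, b2, jt, h⟩
    exact hC0 dt b1 b2 jt h
  have hq : U.mkQ C0 ≠ 0 := by
    rw [Ne, Submodule.mkQ_apply, Submodule.Quotient.mk_eq_zero]
    exact hC0U
  obtain ⟨g, hg⟩ : ∃ g : Module.Dual ℂ (((Fin (m + 1) → ℂ) →ₗ[ℂ] V0) ⧸ U),
      g (U.mkQ C0) ≠ 0 := by
    by_contra hng
    push_neg at hng
    exact hq ((Module.forall_dual_apply_eq_zero_iff ℂ _).mp hng)
  obtain ⟨φ, hφU, hφC0⟩ : ∃ φ : Module.Dual ℂ ((Fin (m + 1) → ℂ) →ₗ[ℂ] V0),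
      (∀ C ∈ U, φ C = 0) ∧ φ C0 ≠ 0 := by
    refine ⟨g ∘ₗ U.mkQ, fun C hC => ?_, hg⟩
    have h0 : U.mkQ C = 0 := by rw [Submodule.mkQ_apply, Submodule.Quotient.mk_eq_zero]; exact hC
    simp [h0]
  obtain ⟨Φ, hΦdef⟩ : ∃ Φ : Fin (m + 1) → Module.Dual ℂ V0,
      Φ = fun k => φ ∘ₗ insMap k := ⟨_, rfl⟩
  have hΦapp : ∀ (k : Fin (m + 1)) (v : V0), Φ k v = φ (insMap k v) := by
    intro k v; rw [hΦdef]; rfl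
  have hb : ∀ (k : Fin (m + 1)) (w : W), Φ k (X.i w) = 0 := by
    intro k w
    have hmem : X.i ∘ₗ insMap k w ∈ U := ⟨0, 0, 0, insMap k w, by simp⟩
    have h := hφU _ hmem
    rw [comp_insMap] at h
    rw [hΦapp]
    exact h
  have hc : ∀ (k : Fin (m + 1)) (v : V0), Φ k (X.B1 (X.d v)) = 0 := by
    intro k v
    have hmem : X.B1 ∘ₗ X.d ∘ₗ insMap k v ∈ U := ⟨0, 0, insMap k v, 0, by simp⟩
    have h := hφU _ hmem
    rw [comp_insMap, comp_insMap] at h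
    rw [hΦapp]
    exact h
  have hd : ∀ (k : Fin (m + 1)) (v : V0), Φ k (X.B2 (X.d v)) = 0 := by
    intro k v
    have hmem : -(X.B2 ∘ₗ X.d ∘ₗ insMap k v) ∈ U := ⟨0, insMap k v, 0, 0, by simp⟩
    have h := hφU _ hmem
    rw [comp_insMap, comp_insMap, map_neg, neg_eq_zero] at h
    rw [hΦapp]
    exact h
  have ha : ∀ (l : Fin m) (u : V1),
      Φ (Fin.castSucc l) (X.B1 u) = Φ (Fin.succ l) (X.B2 u) := by
    intro l u
    have hmem : insMap (Fin.castSucc l) (X.B1 u) - insMap (Fin.succ l) (X.B2 u) ∈ U := by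
      refine ⟨insMap l u, 0, 0, 0, ?_⟩
      simp only [P1, P2, insMap_comp_funLeft, comp_insMap, LinearMap.comp_zero,
        LinearMap.zero_comp]
      abel
    have h := hφU _ hmem
    rw [map_sub, sub_eq_zero] at h
    rw [hΦapp, hΦapp]
    exact h
  have hvanish := key_vanish m X hX Φ ha hb hc hd
  have hdec : C0 = ∑ k, insMap k (C0 (fun j => if k = j then 1 else 0)) := by
    apply LinearMap.ext
    intro x
    rw [LinearMap.sum_apply]
    simp only [insMap_apply]
    exact LinearMap.pi_apply_eq_sum_univ C0 x
  apply hφC0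
  rw [hdec, map_sum]
  refine Finset.sum_eq_zero fun k _ => ?_
  rw [← hΦapp]
  exact hvanish k _
end

section
/- For every integer m ≥ 0, every pair of linear maps (g_0, g_1) ∈ End(ℂ^m) × End(ℂ^{m+1}) satisfying g_0∘P_1 = P_1∘g_1 and g_0∘P_2 = P_2∘g_1 is of the form g_0 = λ·id_{ℂ^m}, g_1 = λ·id_{ℂ^{m+1}} for some λ ∈ ℂ. Equivalently, the endomorphism algebra of the ADHM representation C_m is ℂ·id. -/
/-!
Write `M` for the matrix of `g₁`. Since `P1` and `P2` forget a coordinate, both intertwining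
relations say that the matrix of `g₀` is a corner of `M`: the upper-left one for `P1`, the
lower-right one for `P2`. Hence `M` is constant along its diagonals. The relations also kill the
last column of `M` except its bottom entry and the first column except its top entry, and
following a diagonal to one of these columns shows that every off-diagonal entry vanishes.
-/

namespace LinearMap

variable {R : Type*} [CommSemiring R] {ι ι' κ κ' : Type*} [Fintype κ] [DecidableEq κ]
  {f : ι → κ} {f' : ι' → κ'} {g₀ : (ι → R) →ₗ[R] ι' → R} {g₁ : (κ → R) →ₗ[R] κ' → R}

theorem toMatrix'_eq_submatrix_of_comp_funLeft [Fintype ι] [DecidableEq ι] (hf : f.Injective)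
    (h : g₀ ∘ₗ funLeft R R f = funLeft R R f' ∘ₗ g₁) :
    toMatrix' g₀ = (toMatrix' g₁).submatrix f' f := by
  ext i' i
  have hsingle : funLeft R R f (Pi.single (f i) 1) = Pi.single i 1 := by
    ext k
    simp [Pi.single_apply, hf.eq_iff]
  simpa [hsingle] using congr_fun (congr($h (Pi.single (f i) (1 : R)))) i'

theorem toMatrix'_apply_eq_zero_of_comp_funLeft (h : g₀ ∘ₗ funLeft R R f = funLeft R R f' ∘ₗ g₁)
    {j : κ} (hj : j ∉ Set.range f) (i' : ι') : toMatrix' g₁ (f' i') j = 0 := by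
  have hsingle : funLeft R R f (Pi.single j 1) = 0 := by
    ext k
    exact Pi.single_eq_of_ne (fun hk => hj ⟨k, hk⟩) 1
  simpa [hsingle] using (congr_fun (congr($h (Pi.single j (1 : R)))) i').symm

end LinearMap

section Toeplitz

variable {α : Type*} {n : ℕ} {B : ℕ → ℕ → α}

theorem eq_add_add_of_shift_invariant (hshift : ∀ i j, i < n → j < n → B i j = B (i + 1) (j + 1))
    (k : ℕ) {i j : ℕ} (hi : i + k ≤ n) (hj : j + k ≤ n) : B i j = B (i + k) (j + k) := by
  induction k with
  | zero => rfl
  | succ k ih => rw [ih (by omega) (by omega), hshift _ _ (by omega) (by omega)]; rfl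

variable [Zero α]

theorem eq_ite_of_shift_invariant (hshift : ∀ i j, i < n → j < n → B i j = B (i + 1) (j + 1))
    (hlast : ∀ i < n, B i n = 0) (hzero : ∀ i, 0 < i → i ≤ n → B i 0 = 0)
    {i j : ℕ} (hi : i ≤ n) (hj : j ≤ n) : B i j = if i = j then B 0 0 else 0 := by
  rcases lt_trichotomy i j with hij | rfl | hij
  · calc B i j = B (i + (n - j)) (j + (n - j)) :=
          eq_add_add_of_shift_invariant hshift (n - j) (by omega) (by omega)
      _ = B (i + (n - j)) n := by rw [Nat.add_sub_cancel' hj]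
      _ = if i = j then B 0 0 else 0 := by rw [if_neg hij.ne, hlast _ (by omega)]
  · have hdiag := eq_add_add_of_shift_invariant hshift i (i := 0) (j := 0) (by omega) (by omega)
    simpa using hdiag.symm
  · calc B i j = B (i - j + j) (0 + j) := by rw [Nat.sub_add_cancel hij.le, zero_add]
      _ = B (i - j) 0 := (eq_add_add_of_shift_invariant hshift j (by omega) (by omega)).symm
      _ = if i = j then B 0 0 else 0 := by rw [if_neg hij.ne', hzero _ (by omega) (by omega)]

open Fin.NatCast in
theorem Matrix.eq_diagonal_of_submatrix_castSucc_eq_submatrix_succ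
    (A : Matrix (Fin (n + 1)) (Fin (n + 1)) α)
    (hshift : A.submatrix Fin.castSucc Fin.castSucc = A.submatrix Fin.succ Fin.succ)
    (hlast : ∀ i : Fin n, A i.castSucc (Fin.last n) = 0) (hzero : ∀ i : Fin n, A i.succ 0 = 0) :
    A = Matrix.diagonal fun _ => A 0 0 := by
  have hcast : ∀ (i : ℕ) (hi : i < n + 1), (i : Fin (n + 1)) = ⟨i, hi⟩ :=
    fun i hi => Fin.ext (Nat.mod_eq_of_lt hi)
  have hshift' : ∀ i j : ℕ, i < n → j < n →
      A (i : Fin (n + 1)) (j : Fin (n + 1)) =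
        A ((i + 1 : ℕ) : Fin (n + 1)) ((j + 1 : ℕ) : Fin (n + 1)) := by
    intro i j hi hj
    rw [hcast i (by omega), hcast j (by omega), hcast (i + 1) (by omega), hcast (j + 1) (by omega)]
    exact congr_fun₂ hshift ⟨i, hi⟩ ⟨j, hj⟩
  have hlast' : ∀ i < n, A (i : Fin (n + 1)) (n : Fin (n + 1)) = 0 := by
    intro i hi
    rw [hcast i (by omega), Fin.natCast_eq_last]
    exact hlast ⟨i, hi⟩
  have hzero' : ∀ i, 0 < i → i ≤ n → A (i : Fin (n + 1)) ((0 : ℕ) : Fin (n + 1)) = 0 := by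
    intro i hi₀ hi
    obtain ⟨i, rfl⟩ : ∃ k, i = k + 1 := ⟨i - 1, by omega⟩
    rw [hcast (i + 1) (by omega), Nat.cast_zero]
    exact hzero ⟨i, by omega⟩
  ext i j
  have key := eq_ite_of_shift_invariant (B := fun i j : ℕ => A i j) hshift' hlast' hzero'
    (Nat.lt_succ_iff.mp i.isLt) (Nat.lt_succ_iff.mp j.isLt)
  simpa [Matrix.diagonal_apply, Fin.val_inj] using key

end Toeplitz

/-- The ADHM representation `C_m` (with `V0 = ℂ^m`, `V1 = ℂ^{m+1}`, `B1 = P1`, `B2 = P2`)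
is simple: every pair of endomorphisms intertwining `P1` and `P2` is a scalar multiple of
the identity. -/
theorem Cm_endomorphisms_are_scalars (m : ℕ)
    (g0 : Module.End ℂ (Fin m → ℂ)) (g1 : Module.End ℂ (Fin (m + 1) → ℂ))
    (h1 : g0 ∘ₗ P1 m = P1 m ∘ₗ g1) (h2 : g0 ∘ₗ P2 m = P2 m ∘ₗ g1) :
    ∃ lam : ℂ, g0 = lam • LinearMap.id ∧ g1 = lam • LinearMap.id := by
  set M := LinearMap.toMatrix' g1
  have hM₀ : LinearMap.toMatrix' g0 = M.submatrix Fin.castSucc Fin.castSucc :=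
    LinearMap.toMatrix'_eq_submatrix_of_comp_funLeft (Fin.castSucc_injective m) h1
  have hM₀' : LinearMap.toMatrix' g0 = M.submatrix Fin.succ Fin.succ :=
    LinearMap.toMatrix'_eq_submatrix_of_comp_funLeft (Fin.succ_injective m) h2
  have hM : M = Matrix.diagonal fun _ => M 0 0 :=
    M.eq_diagonal_of_submatrix_castSucc_eq_submatrix_succ (hM₀.symm.trans hM₀')
      (LinearMap.toMatrix'_apply_eq_zero_of_comp_funLeft h1 (by simp))
      (LinearMap.toMatrix'_apply_eq_zero_of_comp_funLeft h2 (by simp))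
  generalize M 0 0 = c at hM
  have toMatrix'_smul_id (n : ℕ) :
      LinearMap.toMatrix' (c • LinearMap.id : Module.End ℂ (Fin n → ℂ)) =
        Matrix.diagonal fun _ => c := by
    rw [map_smul, LinearMap.toMatrix'_id, Matrix.smul_one_eq_diagonal]
  refine ⟨c, LinearMap.toMatrix'.injective ?_, LinearMap.toMatrix'.injective ?_⟩
  · rw [toMatrix'_smul_id, hM₀, hM, Matrix.submatrix_diagonal _ _ (Fin.castSucc_injective m)]
    rfl
  · rw [toMatrix'_smul_id, ← hM]
end

section
/- Let j ≥ 1, N_0 ≥ 0 and N_1, …, N_j ≥ 1 be integers, and set N = N_0 + N_1 + ⋯ + N_j. Then the number of tuples (I_♭, I_♯^{(j)}, I_♯^{(j−1)}, …, I_♯^{(1)}) of pairwise disjoint subsets of {1, …, N} whose union is {1, …, N}, with |I_♭| = N_0, |I_♯^{(i)}| = N_i for each i = 1, …, j, and min(I_♯^{(1)}) > min(I_♯^{(2)}) > ⋯ > min(I_♯^{(j)}), equals N!/(N_0!·∏_{i=1}^j (N_i − 1)!) · ∏_{i=1}^j 1/(N_1 + N_2 + ⋯ + N_i). -/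
/-!
The block with the smallest minimum is the last one, and it must contain `min T`; choosing its
other `Nⱼ - 1` elements and recursing shows that a set of size `Sⱼ` has `∏ᵢ C(Sᵢ - 1, Nᵢ - 1)`
decompositions with strictly decreasing minima, where `Sᵢ = N₁ + ⋯ + Nᵢ`. Choosing `I♭` first
contributes `C(N, N₀)`, and the closed form follows from
`C(Sᵢ - 1, Nᵢ - 1) = Sᵢ! / (Sᵢ · (Nᵢ - 1)! · Sᵢ₋₁!)`, whose factorials telescope.
-/

open Finset Function
open scoped Nat

namespace Fin

variable {β : Type*} {n : ℕ}

theorem pairwise_snoc_iff {r : β → β → Prop} [Std.Symm r] {f : Fin n → β} {a : β} :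
    Pairwise (r on (snoc f a : Fin (n + 1) → β)) ↔ Pairwise (r on f) ∧ ∀ i, r (f i) a := by
  constructor
  · intro h
    refine ⟨fun i k hik => ?_, fun i => ?_⟩
    · simpa [onFun] using h (castSucc_injective n |>.ne hik)
    · simpa [onFun] using h (castSucc_lt_last i).ne
  · rintro ⟨hf, hfa⟩ i k hik
    induction i using lastCases <;> induction k using lastCases
    · exact absurd rfl hik
    · simpa [onFun] using Std.Symm.symm _ _ (hfa _)
    · simpa [onFun] using hfa _
    · simpa [onFun] using hf (ne_of_apply_ne castSucc hik)

theorem strictAnti_snoc_iff [Preorder β] {f : Fin n → β} {a : β} :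
    StrictAnti (snoc f a : Fin (n + 1) → β) ↔ StrictAnti f ∧ ∀ i, a < f i := by
  constructor
  · intro h
    refine ⟨fun i k hik => ?_, fun i => ?_⟩
    · simpa using h (castSucc_lt_castSucc_iff.2 hik)
    · simpa using h (castSucc_lt_last i)
  · rintro ⟨hf, hfa⟩ i k hik
    induction i using lastCases <;> induction k using lastCases
    · exact absurd hik (lt_irrefl _)
    · exact absurd hik (not_lt.2 (le_last _))
    · simpa using hfa _
    · simpa using hf (castSucc_lt_castSucc_iff.1 hik)

theorem biUnion_snoc [DecidableEq β] (c : Fin n → Finset β) (A : Finset β) :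
    univ.biUnion (snoc c A : Fin (n + 1) → Finset β) = univ.biUnion c ∪ A := by
  ext x
  simp [exists_fin_succ', or_comm]

theorem sum_Iic_last {M : Type*} [AddCommMonoid M] (f : Fin (n + 1) → M) :
    ∑ i ≤ last n, f i = ∑ i, f i := by
  rw [← top_eq_last, Iic_top]

end Fin

namespace Finset

section DecidableEq

variable {α : Type*} [DecidableEq α]

theorem union_eq_and_disjoint_iff {A B T : Finset α} :
    A ∪ B = T ∧ Disjoint A B ↔ A ⊆ T ∧ B = T \ A := by
  constructor
  · rintro ⟨rfl, h⟩
    exact ⟨subset_union_left, (union_sdiff_cancel_left h).symm⟩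
  · rintro ⟨h, rfl⟩
    exact ⟨union_sdiff_of_subset h, disjoint_sdiff⟩

theorem card_powersetCard_filter_mem {s : Finset α} {a : α} (ha : a ∈ s) {n : ℕ} (hn : 0 < n) :
    #{t ∈ s.powersetCard n | a ∈ t} = (#s - 1).choose (n - 1) := by
  rw [← card_erase_of_mem ha, ← card_powersetCard]
  refine card_nbij' (·.erase a) (insert a ·) ?_ ?_ ?_ ?_
  · intro t ht
    simp only [coe_filter, mem_powersetCard, Set.mem_ofPred_eq] at ht
    simp [mem_powersetCard, erase_subset_erase a ht.1.1, card_erase_of_mem ht.2, ht.1.2]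
  · intro t ht
    simp only [mem_coe, mem_powersetCard, subset_erase] at ht
    simp only [coe_filter, mem_powersetCard, Set.mem_ofPred_eq, mem_insert_self, and_true]
    rw [card_insert_of_notMem ht.1.2, ht.2, Nat.sub_add_cancel hn]
    exact ⟨insert_subset ha ht.1.1, rfl⟩
  · intro t ht
    simp only [coe_filter, Set.mem_ofPred_eq] at ht
    exact insert_erase ht.2
  · intro t ht
    simp only [mem_coe, mem_powersetCard, subset_erase] at ht
    exact erase_insert ht.1.2

end DecidableEq

variable {α : Type*} [LinearOrder α]

theorem lt_min_biUnion_iff {ι : Type*} {s : Finset ι} {c : ι → Finset α} {a : WithTop α}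
    (ha : a < ⊤) : a < (s.biUnion c).min ↔ ∀ i ∈ s, a < (c i).min := by
  rw [Finset.min, inf_biUnion]
  exact Finset.lt_inf_iff ha

theorem min_lt_min_sdiff_iff {A T : Finset α} (hAT : A ⊆ T) (hA : A.Nonempty) :
    A.min < (T \ A).min ↔ T.min' (hA.mono hAT) ∈ A := by
  rw [← coe_min' hA, Finset.min, Finset.lt_inf_iff (WithTop.coe_lt_top _)]
  simp only [WithTop.coe_lt_coe, mem_sdiff, and_imp]
  constructor
  · intro h
    by_contra ht
    exact (h _ (min'_mem _ _) ht).not_ge (min'_le _ _ (hAT (min'_mem A hA)))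
  · intro ht y hyT hyA
    rw [le_antisymm (min'_le A _ ht) (min'_le T _ (hAT (min'_mem A hA)))]
    exact (min'_le T y hyT).lt_of_ne (ne_of_mem_of_not_mem ht hyA)

end Finset

section SharpDecomposition

variable {α : Type*} [LinearOrder α] {j : ℕ}

/-- The block `c i` is `I♯⁽ⁱ⁺¹⁾` of the informal statement. -/
structure IsSharpDecomposition (Ns : Fin j → ℕ) (T : Finset α) (c : Fin j → Finset α) : Prop where
  biUnion_eq : univ.biUnion c = T
  pairwise_disjoint : Pairwise (Disjoint on c)
  card_eq : ∀ i, #(c i) = Ns i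
  min_strictAnti : StrictAnti fun i => (c i).min

open Classical in
noncomputable def sharpDecompositions (Ns : Fin j → ℕ) (T : Finset α) :
    Finset (Fin j → Finset α) :=
  {c ∈ Fintype.piFinset fun _ => T.powerset | IsSharpDecomposition Ns T c}

theorem mem_sharpDecompositions {Ns : Fin j → ℕ} {T : Finset α} {c : Fin j → Finset α} :
    c ∈ sharpDecompositions Ns T ↔ IsSharpDecomposition Ns T c := by
  simp only [sharpDecompositions, mem_filter, Fintype.mem_piFinset, mem_powerset,
    and_iff_right_iff_imp]
  intro hc i
  rw [← hc.biUnion_eq]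
  exact subset_biUnion_of_mem c (mem_univ i)

theorem isSharpDecomposition_sdiff_iff {Ns : Fin j → ℕ} {U F : Finset α} {c : Fin j → Finset α} :
    F ⊆ U ∧ IsSharpDecomposition Ns (U \ F) c ↔
      F ∪ univ.biUnion c = U ∧ (∀ i, Disjoint F (c i)) ∧
        (∀ i₁ i₂, i₁ ≠ i₂ → Disjoint (c i₁) (c i₂)) ∧ (∀ i, #(c i) = Ns i) ∧
        (∀ i₁ i₂, i₁ < i₂ → (c i₂).min < (c i₁).min) := by
  constructor
  · rintro ⟨hFU, hcU, hD, hc, hM⟩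
    obtain ⟨hU, hF⟩ := union_eq_and_disjoint_iff.2 ⟨hFU, hcU⟩
    exact ⟨hU, fun i => (disjoint_biUnion_right _ _ _).1 hF i (mem_univ i),
      fun i k => @hD i k, hc, fun i k => @hM i k⟩
  · rintro ⟨hU, hF, hD, hc, hM⟩
    obtain ⟨hFU, hcU⟩ := union_eq_and_disjoint_iff.1
      ⟨hU, (disjoint_biUnion_right _ _ _).2 fun i _ => hF i⟩
    exact ⟨hFU, hcU, fun i k => hD i k, hc, fun i k => hM i k⟩

theorem isSharpDecomposition_snoc_iff {Ns : Fin (j + 1) → ℕ} {T A : Finset α}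
    {c : Fin j → Finset α} (hA : A.Nonempty) :
    IsSharpDecomposition Ns T (Fin.snoc c A) ↔
      A ⊆ T ∧ #A = Ns (Fin.last j) ∧ A.min < (T \ A).min ∧
        IsSharpDecomposition (Fin.init Ns) (T \ A) c := by
  have hmin : (fun i => ((Fin.snoc c A : Fin (j + 1) → Finset α) i).min) =
      (Fin.snoc (fun i => (c i).min) A.min : Fin (j + 1) → WithTop α) :=
    Fin.comp_snoc Finset.min c A
  have hAtop : A.min < ⊤ := by rw [← coe_min' hA]; exact WithTop.coe_lt_top _
  constructor
  · rintro ⟨hU, hD, hC, hM⟩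
    rw [Fin.biUnion_snoc, union_comm] at hU
    rw [Fin.pairwise_snoc_iff] at hD
    rw [hmin, Fin.strictAnti_snoc_iff] at hM
    obtain ⟨hAT, hB⟩ := union_eq_and_disjoint_iff.1
      ⟨hU, (disjoint_biUnion_right _ _ _).2 fun i _ => (hD.2 i).symm⟩
    refine ⟨hAT, by simpa using hC (Fin.last j), ?_, hB, hD.1,
      fun i => by simpa [Fin.init] using hC i.castSucc, hM.1⟩
    rw [← hB, lt_min_biUnion_iff hAtop]
    exact fun i _ => hM.2 i
  · rintro ⟨hAT, hAcard, hAmin, hU, hD, hC, hM⟩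
    have hdisj : ∀ i, Disjoint (c i) A := fun i =>
      ((disjoint_biUnion_right _ _ _).1 (hU ▸ disjoint_sdiff) i (mem_univ i)).symm
    refine ⟨?_, Fin.pairwise_snoc_iff.2 ⟨hD, hdisj⟩, ?_, ?_⟩
    · rw [Fin.biUnion_snoc, union_comm, hU, union_sdiff_of_subset hAT]
    · exact Fin.forall_fin_succ'.2 ⟨fun i => by simpa [Fin.init] using hC i, by simpa using hAcard⟩
    · rw [← hU, lt_min_biUnion_iff hAtop] at hAmin
      rw [hmin, Fin.strictAnti_snoc_iff]
      exact ⟨hM, fun i => hAmin i (mem_univ i)⟩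

theorem card_sharpDecompositions_succ {Ns : Fin (j + 1) → ℕ} (hNs : 0 < Ns (Fin.last j))
    {T : Finset α} (hT : T.Nonempty) :
    #(sharpDecompositions Ns T) =
      ∑ A ∈ T.powersetCard (Ns (Fin.last j)) with T.min' hT ∈ A,
        #(sharpDecompositions (Fin.init Ns) (T \ A)) := by
  rw [← Finset.card_sigma]
  refine card_nbij' (fun c => ⟨c (Fin.last j), Fin.init c⟩) (fun p => Fin.snoc p.2 p.1)
    ?_ ?_ (fun c _ => Fin.snoc_init_self c) (fun p _ => by simp)
  · intro c hc
    have hA : (c (Fin.last j)).Nonempty := by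
      rw [← card_pos, (mem_sharpDecompositions.1 hc).card_eq]; exact hNs
    rw [mem_coe, mem_sharpDecompositions, ← Fin.snoc_init_self c,
      isSharpDecomposition_snoc_iff hA] at hc
    obtain ⟨hAT, hAcard, hAmin, hinit⟩ := hc
    simp only [mem_coe, mem_sigma, mem_filter, mem_powersetCard]
    exact ⟨⟨⟨hAT, hAcard⟩, (min_lt_min_sdiff_iff hAT hA).1 hAmin⟩, mem_sharpDecompositions.2 hinit⟩
  · rintro ⟨A, c⟩ hp
    simp only [mem_coe, mem_sigma, mem_filter, mem_powersetCard, mem_sharpDecompositions] at hp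
    obtain ⟨⟨⟨hAT, hAcard⟩, hmem⟩, hc⟩ := hp
    have hA : A.Nonempty := by rw [← card_pos, hAcard]; exact hNs
    rw [mem_coe, mem_sharpDecompositions, isSharpDecomposition_snoc_iff hA]
    exact ⟨hAT, hAcard, (min_lt_min_sdiff_iff hAT hA).2 hmem, hc⟩

theorem card_sharpDecompositions {Ns : Fin j → ℕ} (hNs : ∀ i, 0 < Ns i) {T : Finset α}
    (hT : #T = ∑ i, Ns i) :
    #(sharpDecompositions Ns T) = ∏ i, ((∑ k ≤ i, Ns k) - 1).choose (Ns i - 1) := by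
  induction j generalizing T with
  | zero =>
    obtain rfl : T = ∅ := card_eq_zero.1 (by simpa using hT)
    exact card_eq_one.2 ⟨isEmptyElim, eq_singleton_iff_unique_mem.2
      ⟨mem_sharpDecompositions.2 ⟨by simp, isEmptyElim, isEmptyElim, isEmptyElim⟩,
        fun _ _ => Subsingleton.elim _ _⟩⟩
  | succ j ih =>
    have hsum : ∑ i, Ns i = ∑ i, Fin.init Ns i + Ns (Fin.last j) := Fin.sum_univ_castSucc Ns
    have hT' : T.Nonempty := by rw [← card_pos, hT, hsum]; exact Nat.add_pos_right _ (hNs _)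
    have hfiber : ∀ A ∈ {A ∈ T.powersetCard (Ns (Fin.last j)) | T.min' hT' ∈ A},
        #(sharpDecompositions (Fin.init Ns) (T \ A)) =
          ∏ i, ((∑ k ≤ i, Fin.init Ns k) - 1).choose (Fin.init Ns i - 1) := by
      intro A hA
      obtain ⟨hAT, hAcard⟩ := mem_powersetCard.1 (mem_filter.1 hA).1
      refine ih (fun i => hNs _) ?_
      rw [card_sdiff_of_subset hAT, hT, hsum, hAcard, Nat.add_sub_cancel]
      rfl
    rw [card_sharpDecompositions_succ (hNs _) hT', sum_const_nat hfiber,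
      card_powersetCard_filter_mem (min'_mem T hT') (hNs _), Fin.prod_univ_castSucc, mul_comm,
      Fin.sum_Iic_last, hT]
    simp [Fin.init, Fin.sum_Iic_castSucc]

end SharpDecomposition

section CharZero

variable {K : Type*} [Field K] [CharZero K]

theorem Nat.cast_choose_pred_add {m n : ℕ} (hn : 0 < n) :
    ((m + n - 1).choose (n - 1) : K) = (m + n)! / ((n - 1)! * m ! * (m + n)) := by
  obtain ⟨k, rfl⟩ := Nat.exists_eq_add_of_lt hn
  simp only [zero_add, Nat.add_sub_cancel, ← add_assoc]
  rw [eq_div_iff (by norm_cast; positivity), Nat.factorial_succ,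
    ← Nat.add_choose_mul_factorial_mul_factorial m k]
  push_cast
  ring

theorem prod_choose_sum_Iic {j : ℕ} {Ns : Fin j → ℕ} (hNs : ∀ i, 0 < Ns i) :
    ∏ i, (((∑ k ≤ i, Ns k) - 1).choose (Ns i - 1) : K) =
      (∑ i, Ns i)! / (∏ i, ((Ns i - 1)! : K)) * ∏ i, 1 / ∑ k ≤ i, (Ns k : K) := by
  induction j with
  | zero => simp
  | succ j ih =>
    simp only [Fin.prod_univ_castSucc, Fin.sum_Iic_castSucc, Fin.sum_Iic_last]
    rw [ih fun i => hNs _, ← Nat.cast_sum, Fin.sum_univ_castSucc, Nat.cast_choose_pred_add (hNs _)]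
    have := hNs (Fin.last j)
    have hfact : ∀ n : ℕ, (n ! : K) ≠ 0 := fun n => Nat.cast_ne_zero.2 n.factorial_ne_zero
    field_simp [hfact, prod_ne_zero_iff]
    push_cast
    ring

end CharZero

theorem Nat.card_subtype_prod_eq_sum {β γ : Type*} (s : Finset β) (t : β → Finset γ)
    {P : β × γ → Prop} (hP : ∀ p, P p ↔ p.1 ∈ s ∧ p.2 ∈ t p.1) :
    Nat.card {p // P p} = ∑ b ∈ s, #(t b) := by
  rw [← Finset.card_sigma, ← card_map (Equiv.sigmaEquivProd β γ).toEmbedding,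
    ← Nat.card_eq_finsetCard]
  exact Nat.card_congr (Equiv.subtypeEquivRight fun p => by simp [hP])

theorem card_decomposition_types_general
    (j N0 : ℕ) (Ns : Fin j → ℕ) (hNs : ∀ i, 1 ≤ Ns i)
    (N : ℕ) (hN : N = N0 + ∑ i, Ns i) :
    (Nat.card {p : Finset ℕ × (Fin j → Finset ℕ) //
        (p.1 ∪ Finset.univ.biUnion p.2 = Finset.Icc 1 N) ∧
        (∀ i, Disjoint p.1 (p.2 i)) ∧
        (∀ i₁ i₂ : Fin j, i₁ ≠ i₂ → Disjoint (p.2 i₁) (p.2 i₂)) ∧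
        p.1.card = N0 ∧
        (∀ i, (p.2 i).card = Ns i) ∧
        (∀ i₁ i₂ : Fin j, i₁ < i₂ → (p.2 i₂).min < (p.2 i₁).min)} : ℚ)
    = (Nat.factorial N : ℚ) /
        ((Nat.factorial N0 : ℚ) * ∏ i, (Nat.factorial (Ns i - 1) : ℚ))
      * ∏ i : Fin j, 1 / (∑ k ∈ Finset.Iic i, (Ns k : ℚ)) := by
  have hfiber : ∀ F ∈ powersetCard N0 (Icc 1 N), #(sharpDecompositions Ns (Icc 1 N \ F)) =
      ∏ i, ((∑ k ≤ i, Ns k) - 1).choose (Ns i - 1) := fun F hF => by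
    obtain ⟨hFU, hF⟩ := mem_powersetCard.1 hF
    refine card_sharpDecompositions hNs ?_
    rw [card_sdiff_of_subset hFU, Nat.card_Icc, hF]
    omega
  rw [Nat.card_subtype_prod_eq_sum (powersetCard N0 (Icc 1 N))
      (fun F => sharpDecompositions Ns (Icc 1 N \ F))
      (fun p => by rw [mem_powersetCard, mem_sharpDecompositions, and_right_comm,
        isSharpDecomposition_sdiff_iff]; tauto),
    sum_const_nat hfiber, card_powersetCard, Nat.card_Icc, Nat.add_sub_cancel, Nat.cast_mul,
    Nat.cast_prod, prod_choose_sum_Iic hNs, hN, Nat.cast_choose ℚ (Nat.le_add_right _ _),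
    Nat.add_sub_cancel_left]
  field_simp

/-- Counting tuples `(I♭, I♯⁽¹⁾, …, I♯⁽ʲ⁾)` of pairwise disjoint subsets of `{1, …, N}`
whose union is `{1, …, N}`, with prescribed cardinalities `|I♭| = N₀`, `|I♯⁽ⁱ⁾| = Nᵢ`,
and strictly decreasing minima `min I♯⁽¹⁾ > min I♯⁽²⁾ > ⋯ > min I♯⁽ʲ⁾`
(here `Ns i = N_{i+1}` in 0-based indexing). -/
theorem card_decomposition_types
    (j N0 : ℕ) (hj : 1 ≤ j) (Ns : Fin j → ℕ) (hNs : ∀ i, 1 ≤ Ns i)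
    (N : ℕ) (hN : N = N0 + ∑ i, Ns i) :
    (Nat.card {p : Finset ℕ × (Fin j → Finset ℕ) //
        (p.1 ∪ Finset.univ.biUnion p.2 = Finset.Icc 1 N) ∧
        (∀ i, Disjoint p.1 (p.2 i)) ∧
        (∀ i₁ i₂ : Fin j, i₁ ≠ i₂ → Disjoint (p.2 i₁) (p.2 i₂)) ∧
        p.1.card = N0 ∧
        (∀ i, (p.2 i).card = Ns i) ∧
        (∀ i₁ i₂ : Fin j, i₁ < i₂ → (p.2 i₂).min < (p.2 i₁).min)} : ℚ)
    = (Nat.factorial N : ℚ) /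
        ((Nat.factorial N0 : ℚ) * ∏ i, (Nat.factorial (Ns i - 1) : ℚ))
      * ∏ i : Fin j, 1 / (∑ k ∈ Finset.Iic i, (Ns k : ℚ)) :=
  card_decomposition_types_general j N0 Ns hNs N hN
end

section
/- Let j ≥ 1, N_0 ≥ 0 and N_1, …, N_j ≥ 1 be integers, and set N = N_0 + N_1 + ⋯ + N_j. Then ∏_{i=1}^j (N_1 + ⋯ + N_i) · C(N, N_0) · ∏_{i=1}^j C(N − N_0 − Σ_{k > i} N_k − 1, N_i − 1) = N!/(N_0!·∏_{i=1}^j (N_i − 1)!), where C(a, b) denotes the binomial coefficient a choose b. -/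
private lemma aux_prod_choose (g : ℕ → ℕ) :
    ∀ n : ℕ, (∀ i < n, 1 ≤ g i) →
    ∏ i ∈ Finset.range n,
      ((∑ k ∈ Finset.range (i + 1), g k) *
        ((∑ k ∈ Finset.range (i + 1), g k) - 1).choose (g i - 1) *
        (g i - 1).factorial)
      = (∑ k ∈ Finset.range n, g k).factorial := by
  intro n
  induction n with
  | zero => simp
  | succ n ih =>
    intro h
    rw [Finset.prod_range_succ, ih (fun i hi => h i (hi.trans (Nat.lt_succ_self n)))]
    set S := ∑ k ∈ Finset.range n, g k with hS
    have hg : 1 ≤ g n := h n (Nat.lt_succ_self n)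
    have hS1 : ∑ k ∈ Finset.range (n + 1), g k = S + g n := Finset.sum_range_succ g n
    rw [hS1]
    have hb : g n - 1 ≤ S + g n - 1 := by omega
    have hc := Nat.choose_mul_factorial_mul_factorial hb
    have h2 : S + g n - 1 - (g n - 1) = S := by omega
    rw [h2] at hc
    calc S.factorial *
          ((S + g n) * (S + g n - 1).choose (g n - 1) * (g n - 1).factorial)
        = (S + g n) * ((S + g n - 1).choose (g n - 1) * (g n - 1).factorial * S.factorial) := by
          ring
      _ = (S + g n) * (S + g n - 1).factorial := by rw [hc]
      _ = (S + g n).factorial := Nat.mul_factorial_pred (by omega)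

/-- The binomial-coefficient identity
`∏ᵢ (N₁+⋯+Nᵢ) · C(N, N₀) · ∏ᵢ C(N − N₀ − ∑_{k>i} Nₖ − 1, Nᵢ − 1)
  = N! / (N₀! · ∏ᵢ (Nᵢ − 1)!)`
(here `Ns i = N_{i+1}` in 0-based indexing). -/
theorem prod_choose_eq_factorial_div
    (j N0 : ℕ) (hj : 1 ≤ j) (Ns : Fin j → ℕ) (hNs : ∀ i, 1 ≤ Ns i)
    (N : ℕ) (hN : N = N0 + ∑ i, Ns i) :
    (((∏ i : Fin j, ∑ k ∈ Finset.Iic i, Ns k) *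
        N.choose N0 *
        ∏ i : Fin j, (N - N0 - (∑ k ∈ Finset.Ioi i, Ns k) - 1).choose (Ns i - 1) : ℕ) : ℚ)
    = (Nat.factorial N : ℚ) /
        ((Nat.factorial N0 : ℚ) * ∏ i, (Nat.factorial (Ns i - 1) : ℚ)) := by
  classical
  set g : ℕ → ℕ := fun k => if h : k < j then Ns ⟨k, h⟩ else 1 with hg
  have hgval : ∀ i : Fin j, g i.val = Ns i := fun i => by simp [hg, i.isLt]
  -- split univ into Iic i and Ioi i
  have hsplit : ∀ i : Fin j,
      (∑ k ∈ Finset.Iic i, Ns k) + (∑ k ∈ Finset.Ioi i, Ns k) = ∑ k, Ns k := by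
    intro i
    rw [← Finset.sum_union (by simp [Finset.disjoint_left])]
    congr 1
    ext x
    simp [le_or_gt]
  have hIoi : ∀ i : Fin j,
      N - N0 - (∑ k ∈ Finset.Ioi i, Ns k) - 1 = (∑ k ∈ Finset.Iic i, Ns k) - 1 := by
    intro i
    have := hsplit i
    omega
  have hIic : ∀ i : Fin j,
      ∑ k ∈ Finset.Iic i, Ns k = ∑ k ∈ Finset.range (i.val + 1), g k := by
    intro i
    have hr : Finset.range (i.val + 1) = Finset.Iic i.val := by
      ext x; simp [Nat.lt_succ_iff]
    calc ∑ k ∈ Finset.Iic i, Ns k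
        = ∑ k ∈ Finset.Iic i, g k.val :=
          Finset.sum_congr rfl fun k _ => (hgval k).symm
      _ = ∑ k ∈ (Finset.Iic i).map Fin.valEmbedding, g k := by
          rw [Finset.sum_map]; rfl
      _ = ∑ k ∈ Finset.Iic i.val, g k := by rw [Fin.map_valEmbedding_Iic]
      _ = ∑ k ∈ Finset.range (i.val + 1), g k := by rw [hr]
  have hpos : ∀ i : Fin j, 1 ≤ ∑ k ∈ Finset.Iic i, Ns k :=
    fun i => le_trans (hNs i) (Finset.single_le_sum (f := Ns) (by simp) (by simp))
  -- the key natural-number identity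
  have hprod : ∏ i : Fin j,
      ((∑ k ∈ Finset.Iic i, Ns k) *
        ((∑ k ∈ Finset.Iic i, Ns k) - 1).choose (Ns i - 1) *
        (Ns i - 1).factorial) = (∑ i, Ns i).factorial := by
    have h1 : ∀ i : Fin j,
        ((∑ k ∈ Finset.Iic i, Ns k) *
          ((∑ k ∈ Finset.Iic i, Ns k) - 1).choose (Ns i - 1) *
          (Ns i - 1).factorial)
        = ((∑ k ∈ Finset.range (i.val + 1), g k) *
            ((∑ k ∈ Finset.range (i.val + 1), g k) - 1).choose (g i.val - 1) *
            (g i.val - 1).factorial) := by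
      intro i; rw [hIic i, hgval i]
    rw [Finset.prod_congr rfl (fun i _ => h1 i)]
    rw [Fin.prod_univ_eq_prod_range (fun i =>
      (∑ k ∈ Finset.range (i + 1), g k) *
        ((∑ k ∈ Finset.range (i + 1), g k) - 1).choose (g i - 1) *
        (g i - 1).factorial) j]
    rw [aux_prod_choose g j (fun i hi => by simpa [hg, hi] using hNs ⟨i, hi⟩)]
    rw [← Fin.sum_univ_eq_sum_range g j]
    congr 1
    exact Finset.sum_congr rfl fun i _ => hgval i
  have hkey : ((∏ i : Fin j, ∑ k ∈ Finset.Iic i, Ns k) *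
        N.choose N0 *
        ∏ i : Fin j, (N - N0 - (∑ k ∈ Finset.Ioi i, Ns k) - 1).choose (Ns i - 1)) *
        (N0.factorial * ∏ i, (Ns i - 1).factorial) = N.factorial := by
    have hIoi' : ∏ i : Fin j, (N - N0 - (∑ k ∈ Finset.Ioi i, Ns k) - 1).choose (Ns i - 1)
        = ∏ i : Fin j, ((∑ k ∈ Finset.Iic i, Ns k) - 1).choose (Ns i - 1) :=
      Finset.prod_congr rfl fun i _ => by rw [hIoi i]
    rw [hIoi']
    have : (∏ i : Fin j, ∑ k ∈ Finset.Iic i, Ns k) *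
        N.choose N0 *
        (∏ i : Fin j, ((∑ k ∈ Finset.Iic i, Ns k) - 1).choose (Ns i - 1)) *
        (N0.factorial * ∏ i, (Ns i - 1).factorial)
        = (∏ i : Fin j,
            ((∑ k ∈ Finset.Iic i, Ns k) *
              ((∑ k ∈ Finset.Iic i, Ns k) - 1).choose (Ns i - 1) *
              (Ns i - 1).factorial)) * (N.choose N0 * N0.factorial) := by
      rw [Finset.prod_mul_distrib, Finset.prod_mul_distrib]
      ring
    rw [this, hprod]
    have hle : N0 ≤ N := by omega
    have hcf := Nat.choose_mul_factorial_mul_factorial hle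
    have hNN0 : N - N0 = ∑ i, Ns i := by omega
    rw [hNN0] at hcf
    calc (∑ i, Ns i).factorial * (N.choose N0 * N0.factorial)
        = N.choose N0 * N0.factorial * (∑ i, Ns i).factorial := by ring
      _ = N.factorial := hcf
  have hne : ((Nat.factorial N0 : ℚ) * ∏ i, (Nat.factorial (Ns i - 1) : ℚ)) ≠ 0 :=
    mul_ne_zero (Nat.cast_ne_zero.2 N0.factorial_ne_zero)
      (Finset.prod_ne_zero_iff.2 fun i _ => Nat.cast_ne_zero.2 (Nat.factorial_ne_zero _))
  rw [eq_div_iff hne]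
  exact_mod_cast congrArg (Nat.cast : ℕ → ℚ) hkey
end
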